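/- Let D be a domain and R = R(D). For any union S of prime ideals of R, the set L(S) = {x ∈ D \ {0} : 1/x ∉ S} ∪ {0} is a subring of D that is also a factroid of D (closed under addition, multiplication, contains 1, and closed under factors of nonzero elements). -/
import Mathlib


noncomputable def recip (D : Type*) [CommRing D] [IsDomain D] : Subring (FractionRing D) :=
  Subring.closure {x | ∃ d : D, d ≠ 0 ∧ x = (algebraMap D (FractionRing D) d)⁻¹}

/-- For a union `S = ⋃_{q ∈ X} q` of prime ideals of `R(D)`, the set
`L(S) = {x ∈ D \ {0} : 1/x ∉ S} ∪ {0}`. -/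
def Lset {D : Type*} [CommRing D] [IsDomain D] (X : Set (Ideal (recip D))) : Set D :=
  {x : D | x = 0 ∨ (x ≠ 0 ∧ ∀ q ∈ X, ∀ α : recip D,
    (α : FractionRing D) = (algebraMap D (FractionRing D) x)⁻¹ → α ∉ q)}

noncomputable def rinv {D : Type*} [CommRing D] [IsDomain D] (x : D) (hx : x ≠ 0) : recip D :=
  ⟨(algebraMap D (FractionRing D) x)⁻¹, Subring.subset_closure ⟨x, hx, rfl⟩⟩

lemma mem_Lset_iff {D : Type*} [CommRing D] [IsDomain D] {X : Set (Ideal (recip D))}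
    {x : D} (hx : x ≠ 0) : x ∈ Lset X ↔ ∀ q ∈ X, rinv x hx ∉ q := by
  constructor
  · rintro (rfl | ⟨-, h⟩)
    · exact absurd rfl hx
    · exact fun q hq => h q hq _ rfl
  · intro h
    refine Or.inr ⟨hx, fun q hq α hα => ?_⟩
    have : α = rinv x hx := Subtype.ext hα
    rw [this]; exact h q hq

lemma amap_ne {D : Type*} [CommRing D] [IsDomain D] {x : D} (hx : x ≠ 0) :
    algebraMap D (FractionRing D) x ≠ 0 := by
  simpa using fun h => hx (IsFractionRing.injective D (FractionRing D) (by simpa using h))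

lemma rinv_mul {D : Type*} [CommRing D] [IsDomain D] {f g : D} (hf : f ≠ 0) (hg : g ≠ 0) :
    rinv (f * g) (mul_ne_zero hf hg) = rinv f hf * rinv g hg := by
  apply Subtype.ext
  show (algebraMap D (FractionRing D) (f * g))⁻¹ = _ * _
  rw [map_mul, mul_inv]
  rfl

lemma rinv_neg {D : Type*} [CommRing D] [IsDomain D] {x : D} (hx : x ≠ 0) :
    rinv (-x) (neg_ne_zero.mpr hx) = - rinv x hx := by
  apply Subtype.ext
  show (algebraMap D (FractionRing D) (-x))⁻¹ = -((algebraMap D (FractionRing D) x)⁻¹)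
  rw [map_neg, inv_neg]

lemma rinv_one {D : Type*} [CommRing D] [IsDomain D] :
    rinv (1 : D) one_ne_zero = 1 := by
  apply Subtype.ext
  show (algebraMap D (FractionRing D) 1)⁻¹ = 1
  rw [map_one, inv_one]

lemma rinv_add {D : Type*} [CommRing D] [IsDomain D] {f g : D} (hf : f ≠ 0) (hg : g ≠ 0)
    (hfg : f + g ≠ 0) :
    rinv (f + g) hfg * (rinv f hf + rinv g hg) = rinv f hf * rinv g hg := by
  apply Subtype.ext
  show (algebraMap D (FractionRing D) (f + g))⁻¹ *
      ((algebraMap D (FractionRing D) f)⁻¹ + (algebraMap D (FractionRing D) g)⁻¹) =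
      (algebraMap D (FractionRing D) f)⁻¹ * (algebraMap D (FractionRing D) g)⁻¹
  have h1 := amap_ne hf
  have h2 := amap_ne hg
  have h3 := amap_ne hfg
  rw [map_add] at h3 ⊢
  field_simp
  ring

/-- For any union `S` of prime ideals of `R(D)`, the set
`L(S) = {x ≠ 0 : 1/x ∉ S} ∪ {0}` is a subring of `D` and is a factroid of `D`
(closed under factors of its nonzero elements). -/
theorem stmt_19 {D : Type*} [CommRing D] [IsDomain D]
    (X : Set (Ideal (recip D))) (hX : ∀ q ∈ X, q.IsPrime) :
    (∃ H : Subring D, (H : Set D) = Lset X) ∧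
    (∀ f g : D, f ≠ 0 → g ≠ 0 → f * g ∈ Lset X → f ∈ Lset X ∧ g ∈ Lset X) := by
  have mul_lem : ∀ f g : D, (hf : f ≠ 0) → (hg : g ≠ 0) → f ∈ Lset X → g ∈ Lset X →
      f * g ∈ Lset X := by
    intro f g hf hg hfm hgm
    rw [mem_Lset_iff hf] at hfm
    rw [mem_Lset_iff hg] at hgm
    rw [mem_Lset_iff (mul_ne_zero hf hg)]
    intro q hq hmem
    rw [rinv_mul hf hg] at hmem
    rcases (hX q hq).mem_or_mem hmem with h | h
    · exact hfm q hq h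
    · exact hgm q hq h
  constructor
  · refine ⟨{ carrier := Lset X,
              zero_mem' := Or.inl rfl,
              one_mem' := ?_,
              mul_mem' := ?_,
              add_mem' := ?_,
              neg_mem' := ?_ }, rfl⟩
    · intro f g hfm hgm
      rcases eq_or_ne f 0 with rfl | hf
      · exact Or.inl (zero_mul g)
      rcases eq_or_ne g 0 with rfl | hg
      · exact Or.inl (mul_zero f)
      exact mul_lem f g hf hg hfm hgm
    · rw [mem_Lset_iff (one_ne_zero : (1:D) ≠ 0)]
      intro q hq hmem
      rw [rinv_one] at hmem
      exact (hX q hq).ne_top (q.eq_top_iff_one.mpr hmem)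
    · intro f g hfm hgm
      rcases eq_or_ne f 0 with rfl | hf
      · simpa using hgm
      rcases eq_or_ne g 0 with rfl | hg
      · simpa using hfm
      rcases eq_or_ne (f + g) 0 with h0 | h0
      · exact Or.inl h0
      rw [mem_Lset_iff hf] at hfm
      rw [mem_Lset_iff hg] at hgm
      rw [mem_Lset_iff h0]
      intro q hq hmem
      have : rinv f hf * rinv g hg ∈ q := by
        rw [← rinv_add hf hg h0]
        exact Ideal.mul_mem_right _ _ hmem
      rcases (hX q hq).mem_or_mem this with h | h
      · exact hfm q hq h
      · exact hgm q hq h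
    · intro x hxm
      rcases eq_or_ne x 0 with rfl | hx
      · exact Or.inl neg_zero
      rw [mem_Lset_iff hx] at hxm
      rw [mem_Lset_iff (neg_ne_zero.mpr hx)]
      intro q hq hmem
      rw [rinv_neg hx] at hmem
      exact hxm q hq (by simpa using q.neg_mem hmem)
  · intro f g hf hg hmem
    rw [mem_Lset_iff (mul_ne_zero hf hg)] at hmem
    constructor
    · rw [mem_Lset_iff hf]
      intro q hq h
      exact hmem q hq (by rw [rinv_mul hf hg]; exact Ideal.mul_mem_right _ _ h)
    · rw [mem_Lset_iff hg]
      intro q hq h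
      exact hmem q hq (by rw [rinv_mul hf hg]; exact Ideal.mul_mem_left _ _ h)
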